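/- arXiv:math/0701490 — 3 statements merged into one kernel-verified Lean document; each statement's English description precedes it below -/
import Mathlib

section
/- The Wallis integrals satisfy the asymptotic ∫_{-π/2}^{π/2} cos^n θ dθ ∼ √(2π/n) as n → ∞, i.e. the ratio of the left side to √(2π/n) tends to 1. -/
open Filter Real intervalIntegral

noncomputable def I (n : ℕ) : ℝ := ∫ θ in (-(π / 2) : ℝ)..(π / 2), Real.cos θ ^ n

lemma Ipos (n : ℕ) : 0 < I n := by
  apply intervalIntegral.intervalIntegral_pos_of_pos_on
  · exact (Real.continuous_cos.pow n).intervalIntegrable _ _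
  · intro x hx
    exact pow_pos (Real.cos_pos_of_mem_Ioo ⟨hx.1, hx.2⟩) n
  · linarith [Real.pi_pos]

lemma Imono (n : ℕ) : I (n + 1) ≤ I n := by
  apply intervalIntegral.integral_mono_on (by linarith [Real.pi_pos])
    ((Real.continuous_cos.pow _).intervalIntegrable _ _)
    ((Real.continuous_cos.pow _).intervalIntegrable _ _)
  intro x hx
  exact pow_le_pow_of_le_one (Real.cos_nonneg_of_mem_Icc ⟨hx.1, hx.2⟩)
    (Real.cos_le_one x) (Nat.le_succ n)

lemma Irec (n : ℕ) : I (n + 2) = (n + 1) / (n + 2) * I n := by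
  have := integral_cos_pow (a := -(π / 2)) (b := π / 2) n
  simpa [I, Real.cos_pi_div_two] using this

lemma Iprod (n : ℕ) : (n + 1 : ℝ) * (I (n + 1) * I n) = 2 * π := by
  induction n with
  | zero =>
    have h0 : I 0 = π := by simp [I]
    have h1 : I 1 = 2 := by simp [I]; norm_num
    rw [h0, h1]; norm_num
  | succ n ih =>
    have h2 : I (n + 2) = (n + 1) / (n + 2) * I n := Irec n
    push_cast
    rw [show n + 1 + 1 = n + 2 from rfl, h2]
    have hn2 : ((n:ℝ) + 2) ≠ 0 := by positivity
    push_cast at ih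
    field_simp
    linear_combination ((n:ℝ) + 2) * ih

lemma ratio_tendsto : Tendsto (fun n : ℕ => I n / I (n + 1)) atTop (nhds 1) := by
  have hup : ∀ n : ℕ, I n / I (n + 1) ≤ (n + 2) / (n + 1) := by
    intro n
    rw [div_le_div_iff₀ (Ipos (n + 1)) (by positivity)]
    have h3 := Imono (n + 1)
    rw [show n + 1 + 1 = n + 2 from rfl, Irec n] at h3
    have hn2 : (0:ℝ) < (n:ℝ) + 2 := by positivity
    rw [div_mul_eq_mul_div, div_le_iff₀ hn2] at h3
    linarith
  have hlo : ∀ n : ℕ, 1 ≤ I n / I (n + 1) :=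
    fun n => (one_le_div (Ipos (n + 1))).2 (Imono n)
  have : Tendsto (fun n : ℕ => ((n:ℝ) + 2) / (n + 1)) atTop (nhds 1) := by
    have h0 : Tendsto (fun n : ℕ => 1 + 1 / ((n:ℝ) + 1)) atTop (nhds (1 + 0)) :=
      tendsto_const_nhds.add tendsto_one_div_add_atTop_nhds_zero_nat
    rw [add_zero] at h0
    refine h0.congr fun n => ?_
    have : ((n:ℝ) + 1) ≠ 0 := by positivity
    field_simp
    ring
  exact tendsto_of_tendsto_of_tendsto_of_le_of_le tendsto_const_nhds this
    (fun n => hlo n) (fun n => hup n)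

/-- Wallis asymptotics: `∫_{-π/2}^{π/2} cos^n θ dθ ∼ √(2π/n)` as `n → ∞`, i.e. the
ratio of the integral to `√(2π/n)` tends to `1`. -/
theorem stmt_1 :
    Tendsto
      (fun n : ℕ =>
        (∫ θ in (-(π / 2) : ℝ)..(π / 2), Real.cos θ ^ n) / Real.sqrt (2 * π / n))
      atTop (nhds 1) := by
  have h1 : Tendsto (fun n : ℕ => (I n / I (n + 1)) * ((n : ℝ) / (n + 1))) atTop
      (nhds (1 * 1)) := ratio_tendsto.mul (tendsto_natCast_div_add_atTop (1 : ℝ))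
  rw [one_mul] at h1
  have h2 := (Real.continuous_sqrt.tendsto 1).comp h1
  rw [Real.sqrt_one] at h2
  refine h2.congr' ?_
  filter_upwards [eventually_ge_atTop 1] with n hn
  have hπ : (0 : ℝ) < π := Real.pi_pos
  have hn0 : (0 : ℝ) < n := by exact_mod_cast hn
  have hprod := Iprod n
  have key : I n / I (n + 1) * ((n : ℝ) / (n + 1)) = I n ^ 2 / (2 * π / n) := by
    have hI1 := Ipos (n + 1)
    have hn1 : ((n : ℝ) + 1) ≠ 0 := by positivity
    field_simp
    linear_combination (-(I n)) * hprod
  simp only [Function.comp_apply]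
  rw [key, Real.sqrt_div (sq_nonneg _), Real.sqrt_sq (Ipos n).le]
  rfl
end

section
/- For a fixed bounded continuous function f : ℝ → ℝ, the limit as n → ∞ of (∫_{-π/2}^{π/2} f(R√n sin θ) cos^n θ dθ) / (∫_{-π/2}^{π/2} cos^n θ dθ) equals (1/√(2π)) ∫_{-∞}^{∞} f(Rψ) e^{-ψ²/2} dψ. -/
open Filter Real MeasureTheory Set

/-- Pointwise limit: `(1 - ψ²/n)^((n-1)/2) → exp(-ψ²/2)`. -/
lemma gateaux_ptlim (ψ : ℝ) :
    Tendsto (fun n : ℕ => (1 - ψ ^ 2 / n) ^ (((n : ℝ) - 1) / 2))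
      atTop (nhds (Real.exp (-ψ ^ 2 / 2))) := by
  have hL : Tendsto (fun n : ℕ => (n : ℝ) * Real.log (1 + (-ψ ^ 2) / n)) atTop
      (nhds (-ψ ^ 2)) :=
    (Real.tendsto_mul_log_one_add_div_atTop (-ψ ^ 2)).comp tendsto_natCast_atTop_atTop
  have hM : Tendsto (fun n : ℕ => ((n : ℝ) - 1) / (2 * n)) atTop (nhds (1 / 2)) := by
    have h0 : Tendsto (fun n : ℕ => (1 - ((n : ℝ))⁻¹) / 2) atTop (nhds ((1 - 0) / 2)) :=
      (tendsto_const_nhds.sub tendsto_inv_atTop_nhds_zero_nat).div_const 2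
    rw [show ((1 : ℝ) - 0) / 2 = 1 / 2 by norm_num] at h0
    refine h0.congr' ?_
    filter_upwards [eventually_ge_atTop 1] with n hn
    have hn0 : (n : ℝ) ≠ 0 := Nat.cast_ne_zero.2 (by omega)
    field_simp
  have hP : Tendsto
      (fun n : ℕ => ((n : ℝ) * Real.log (1 + (-ψ ^ 2) / n)) * (((n : ℝ) - 1) / (2 * n)))
      atTop (nhds ((-ψ ^ 2) * (1 / 2))) := hL.mul hM
  have hE := (Real.continuous_exp.tendsto _).comp hP
  rw [show Real.exp (-ψ ^ 2 / 2) = Real.exp ((-ψ ^ 2) * (1 / 2)) by ring_nf] 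
  refine hE.congr' ?_
  filter_upwards [eventually_gt_atTop ⌈ψ ^ 2⌉₊] with n hn
  have hlt : ψ ^ 2 < (n : ℝ) := lt_of_le_of_lt (Nat.le_ceil _) (by exact_mod_cast hn)
  have hn0 : (n : ℝ) ≠ 0 := Nat.cast_ne_zero.2 (by omega)
  have hpos : 0 < 1 - ψ ^ 2 / n := by
    rw [sub_pos, div_lt_one (by positivity)]; exact hlt
  simp only [Function.comp]
  rw [Real.rpow_def_of_pos hpos]
  congr 1
  rw [show (1 : ℝ) + (-ψ ^ 2) / n = 1 - ψ ^ 2 / n by ring]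
  field_simp

/-- Main auxiliary: for continuous bounded `F`,
`√n ∫_{-π/2}^{π/2} F(√n sin θ) cosⁿθ dθ → ∫ F(ψ) e^{-ψ²/2} dψ`. -/
lemma gateaux_aux (F : ℝ → ℝ) (hF : Continuous F) (C : ℝ) (hC : ∀ x, |F x| ≤ C) :
    Tendsto (fun n : ℕ =>
        Real.sqrt n * ∫ θ in (-(π / 2) : ℝ)..(π / 2), F (Real.sqrt n * Real.sin θ) * Real.cos θ ^ n)
      atTop (nhds (∫ ψ : ℝ, F ψ * Real.exp (-ψ ^ 2 / 2))) := by
  have hC0 : 0 ≤ C := le_trans (abs_nonneg _) (hC 0)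
  set Φ : ℕ → ℝ → ℝ := fun n =>
    (Ioc (-Real.sqrt n) (Real.sqrt n)).indicator
      (fun ψ => F ψ * (1 - ψ ^ 2 / n) ^ (((n : ℝ) - 1) / 2)) with hΦ
  have key : Tendsto (fun n => ∫ ψ : ℝ, Φ n ψ) atTop
      (nhds (∫ ψ : ℝ, F ψ * Real.exp (-ψ ^ 2 / 2))) := by
    apply tendsto_integral_of_dominated_convergence
        (fun ψ => (C * Real.exp (1 / 2)) * Real.exp (-(1 / 2) * ψ ^ 2))
    · intro n
      rcases Nat.eq_zero_or_pos n with rfl | hn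
      · simp only [hΦ, Nat.cast_zero, Real.sqrt_zero, neg_zero, Ioc_self, indicator_empty]
        exact aestronglyMeasurable_const
      · have hcn : (0:ℝ) ≤ ((n : ℝ) - 1) / 2 := by
          have : (1:ℝ) ≤ (n:ℝ) := by exact_mod_cast hn
          linarith
        exact ((hF.mul ((Real.continuous_rpow_const hcn).comp
          (continuous_const.sub ((continuous_pow 2).div_const _)))).aestronglyMeasurable).indicator
          measurableSet_Ioc
    · exact (integrable_exp_neg_mul_sq (by norm_num : (0:ℝ) < 1/2)).const_mul _
    · intro n
      refine Filter.Eventually.of_forall (fun ψ => ?_)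
      by_cases hmem : ψ ∈ Ioc (-Real.sqrt n) (Real.sqrt n)
      · rcases Nat.eq_zero_or_pos n with rfl | hn
        · simp [Real.sqrt_zero] at hmem
        have hn0 : (0:ℝ) < n := by exact_mod_cast hn
        have hsq : ψ ^ 2 ≤ (n : ℝ) := by
          have := sq_le_sq' (neg_le_of_neg_le hmem.1.le |> fun h => by linarith [hmem.1.le]) hmem.2
          calc ψ ^ 2 ≤ Real.sqrt n ^ 2 := sq_le_sq' (by linarith [hmem.1.le]) hmem.2
          _ = (n : ℝ) := Real.sq_sqrt (by positivity)
        have hr0 : 0 ≤ 1 - ψ ^ 2 / n := by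
          rw [sub_nonneg, div_le_one hn0]; exact hsq
        have hcn : (0:ℝ) ≤ ((n : ℝ) - 1) / 2 := by
          have : (1:ℝ) ≤ n := by exact_mod_cast hn
          linarith
        simp only [hΦ, Real.norm_eq_abs, indicator_of_mem hmem]
        rw [abs_mul, abs_of_nonneg (Real.rpow_nonneg hr0 _)]
        have h1 : (1 - ψ ^ 2 / n) ^ (((n : ℝ) - 1) / 2)
            ≤ Real.exp (-(ψ ^ 2) / n) ^ (((n : ℝ) - 1) / 2) := by
          apply Real.rpow_le_rpow hr0 _ hcn
          have := Real.add_one_le_exp (-(ψ ^ 2) / n)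
          have h' : -(ψ ^ 2) / (n:ℝ) = -(ψ ^ 2 / n) := neg_div _ _
          linarith
        have h2 : Real.exp (-(ψ ^ 2) / n) ^ (((n : ℝ) - 1) / 2)
            = Real.exp (-(ψ ^ 2) / n * (((n : ℝ) - 1) / 2)) := by
          rw [← Real.exp_mul]
        have h3 : -(ψ ^ 2) / n * (((n : ℝ) - 1) / 2) ≤ 1 / 2 + -(1 / 2) * ψ ^ 2 := by
          rw [div_mul_div_comm, div_le_iff₀ (by positivity)]
          nlinarith
        calc |F ψ| * (1 - ψ ^ 2 / n) ^ (((n : ℝ) - 1) / 2)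
            ≤ C * Real.exp (-(ψ ^ 2) / n * (((n : ℝ) - 1) / 2)) := by
              refine mul_le_mul (hC ψ) (by rw [← h2]; exact h1) (by positivity) hC0
          _ ≤ C * (Real.exp (1 / 2) * Real.exp (-(1 / 2) * ψ ^ 2)) := by
              rw [← Real.exp_add]
              exact mul_le_mul_of_nonneg_left (Real.exp_le_exp.2 h3) hC0
          _ = C * Real.exp (1 / 2) * Real.exp (-(1 / 2) * ψ ^ 2) := by ring
      · simp only [hΦ, Real.norm_eq_abs, indicator_of_notMem hmem, norm_zero]
        positivity
    · refine Filter.Eventually.of_forall (fun ψ => ?_)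
      have hlim : Tendsto (fun n : ℕ => F ψ * (1 - ψ ^ 2 / n) ^ (((n : ℝ) - 1) / 2))
          atTop (nhds (F ψ * Real.exp (-ψ ^ 2 / 2))) :=
        (gateaux_ptlim ψ).const_mul (F ψ)
      refine hlim.congr' ?_
      filter_upwards [eventually_gt_atTop ⌈ψ ^ 2⌉₊] with n hn
      have hlt : ψ ^ 2 < (n : ℝ) := lt_of_le_of_lt (Nat.le_ceil _) (by exact_mod_cast hn)
      have hmem : ψ ∈ Ioc (-Real.sqrt n) (Real.sqrt n) := by
        have habs : |ψ| < Real.sqrt n := by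
          rw [← Real.sqrt_sq_eq_abs]
          exact Real.sqrt_lt_sqrt (sq_nonneg _) hlt
        rcases abs_lt.1 habs with ⟨h1, h2⟩
        exact ⟨h1, h2.le⟩
      simp only [hΦ, indicator_of_mem hmem]
  refine key.congr' ?_
  filter_upwards [eventually_ge_atTop 1] with n hn
  have hn0 : (0:ℝ) < n := by exact_mod_cast hn
  have hcn : (0:ℝ) ≤ ((n : ℝ) - 1) / 2 := by
    have : (1:ℝ) ≤ (n:ℝ) := by exact_mod_cast hn
    linarith
  set h : ℝ → ℝ := fun ψ => F ψ * (1 - ψ ^ 2 / n) ^ (((n : ℝ) - 1) / 2) with hh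
  have hhc : Continuous h := hF.mul ((Real.continuous_rpow_const hcn).comp
    (continuous_const.sub ((continuous_pow 2).div_const _)))
  have hsub : (∫ θ in (-(π/2) : ℝ)..(π/2),
        (Real.sqrt n * Real.cos θ) • h (Real.sqrt n * Real.sin θ))
      = ∫ ψ in (-(Real.sqrt n) : ℝ)..(Real.sqrt n), h ψ := by
    have := intervalIntegral.integral_comp_smul_deriv
      (f := fun θ => Real.sqrt n * Real.sin θ) (f' := fun θ => Real.sqrt n * Real.cos θ)
      (a := -(π/2)) (b := π/2) (g := h)
      (fun θ _ => (Real.hasDerivAt_sin θ).const_mul _)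
      (Continuous.continuousOn (by continuity)) hhc
    simpa [Real.sin_pi_div_two, Real.sin_neg, mul_neg, mul_one] using this
  have hIoc : (∫ ψ in (-(Real.sqrt n) : ℝ)..(Real.sqrt n), h ψ) = ∫ ψ : ℝ, Φ n ψ := by
    rw [intervalIntegral.integral_of_le (neg_le_self (Real.sqrt_nonneg _)), hΦ,
      ← MeasureTheory.integral_indicator measurableSet_Ioc]
  have hcongr : ∀ θ ∈ uIcc (-(π/2):ℝ) (π/2),
      (Real.sqrt n * Real.cos θ) • h (Real.sqrt n * Real.sin θ)
        = Real.sqrt n * (F (Real.sqrt n * Real.sin θ) * Real.cos θ ^ n) := by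
    intro θ hθ
    rw [uIcc_of_le (by linarith [Real.pi_pos])] at hθ
    have hcos : 0 ≤ Real.cos θ := Real.cos_nonneg_of_mem_Icc hθ
    have h1 : (Real.sqrt n * Real.sin θ) ^ 2 / n = Real.sin θ ^ 2 := by
      rw [mul_pow, Real.sq_sqrt (by positivity : (0:ℝ) ≤ n)]
      field_simp
    have h2 : (1 : ℝ) - Real.sin θ ^ 2 = Real.cos θ ^ 2 := (Real.cos_sq' θ).symm
    have h3 : (Real.cos θ ^ 2 : ℝ) ^ (((n:ℝ) - 1)/2) = Real.cos θ ^ (n - 1) := by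
      rw [← Real.rpow_natCast (Real.cos θ) 2, ← Real.rpow_mul hcos,
        show ((2:ℕ):ℝ) * (((n:ℝ) - 1)/2) = ((n - 1 : ℕ):ℝ) by
          rw [Nat.cast_sub hn]; push_cast; ring]
      exact Real.rpow_natCast _ _
    have h4 : Real.cos θ ^ (n-1) * Real.cos θ = Real.cos θ ^ n := by
      rw [← pow_succ]
      congr 1
      omega
    rw [hh]
    simp only [smul_eq_mul]
    rw [h1, h2, h3, ← h4]
    ring
  calc (∫ ψ : ℝ, Φ n ψ)
      = ∫ θ in (-(π/2) : ℝ)..(π/2),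
          (Real.sqrt n * Real.cos θ) • h (Real.sqrt n * Real.sin θ) := by
        rw [hsub, hIoc]
    _ = ∫ θ in (-(π/2) : ℝ)..(π/2),
          Real.sqrt n * (F (Real.sqrt n * Real.sin θ) * Real.cos θ ^ n) :=
        intervalIntegral.integral_congr hcongr
    _ = Real.sqrt n * ∫ θ in (-(π/2) : ℝ)..(π/2),
          F (Real.sqrt n * Real.sin θ) * Real.cos θ ^ n :=
        intervalIntegral.integral_const_mul _ _


/-- Gateaux's mean value computation: for `R > 0` and `f : ℝ → ℝ` bounded and continuous,
`(∫_{-π/2}^{π/2} f(R√n sin θ) cosⁿ θ dθ) / (∫_{-π/2}^{π/2} cosⁿ θ dθ)` converges, as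
`n → ∞`, to `(1/√(2π)) ∫_ℝ f(Rψ) e^{-ψ²/2} dψ`. -/
theorem stmt_2 (R : ℝ) (hR : 0 < R) (f : ℝ → ℝ) (hf : Continuous f)
    (hb : ∃ C, ∀ x, |f x| ≤ C) :
    Tendsto
      (fun n : ℕ =>
        (∫ θ in (-(π / 2) : ℝ)..(π / 2), f (R * Real.sqrt n * Real.sin θ) * Real.cos θ ^ n) /
          (∫ θ in (-(π / 2) : ℝ)..(π / 2), Real.cos θ ^ n))
      atTop
      (nhds ((1 / Real.sqrt (2 * π)) * ∫ ψ : ℝ, f (R * ψ) * Real.exp (-ψ ^ 2 / 2))) := by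
  obtain ⟨C, hC⟩ := hb
  have hN := gateaux_aux (fun x => f (R * x))
    (hf.comp (continuous_const.mul continuous_id)) C (fun x => hC _)
  have hD := gateaux_aux (fun _ => (1:ℝ)) continuous_const 1 (by norm_num)
  simp only [one_mul] at hD
  have hDval : (∫ ψ : ℝ, Real.exp (-ψ ^ 2 / 2)) = Real.sqrt (2 * π) := by
    simp_rw [show ∀ ψ : ℝ, -ψ ^ 2 / 2 = -(1/2) * ψ ^ 2 from fun ψ => by ring]
    rw [integral_gaussian, show (π / (1/2) : ℝ) = 2 * π by ring]
  rw [hDval] at hD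
  have hs2π : Real.sqrt (2 * π) ≠ 0 := by
    refine ne_of_gt (Real.sqrt_pos.2 ?_)
    positivity
  have hT := hN.div hD hs2π
  rw [one_div_mul_eq_div]
  refine hT.congr' ?_
  filter_upwards [eventually_ge_atTop 1] with n hn
  have hs : Real.sqrt n ≠ 0 := by
    refine ne_of_gt (Real.sqrt_pos.2 ?_)
    exact_mod_cast Nat.pos_of_ne_zero (by omega)
  simp only [Pi.div_apply]
  rw [mul_div_mul_left _ _ hs]
  simp only [← mul_assoc]
end

section
/- The density of the first coordinate of a point uniformly distributed on the sphere of radius R√n in ℝ^n is proportional to (nR² − z²)^{(n-3)/2} on the interval [−√n R, √n R]; more precisely, the (n−2)-dimensional volume of the intersection of the sphere {x ∈ ℝ^n : ‖x‖ = √n R} with the hyperplane {x₁ = z} equals (√(nR² − z²))^{n−2} · A_{n-2}, where A_{n-2} is the surface area of the unit (n−2)-sphere. -/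
open MeasureTheory

open scoped Pointwise

private lemma normsq_eq {k : ℕ} (y : EuclideanSpace ℝ (Fin k)) :
    ‖y‖ ^ 2 = ∑ i, y i ^ 2 := by
  rw [EuclideanSpace.norm_eq, Real.sq_sqrt (by positivity)]
  simp [sq_abs]

/-- Gateaux's slicing computation: for `n ≥ 3`, `R > 0` and `z² ≤ nR²`, the
`(n−2)`-dimensional (Hausdorff) volume of the intersection of the sphere
`{x ∈ ℝ^n : ‖x‖ = √n·R}` with the hyperplane `{x₁ = z}` equals
`(√(nR² − z²))^{n−2} · A_{n−2}`, where `A_{n−2}` is the `(n−2)`-dimensional surface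
area of the unit sphere in `ℝ^{n−1}`. -/
theorem stmt_5 (n : ℕ) (hn : 3 ≤ n) (R z : ℝ) (hR : 0 < R) (hz : z ^ 2 ≤ n * R ^ 2) :
    μH[(n : ℝ) - 2]
        {x : EuclideanSpace ℝ (Fin n) |
          ‖x‖ = Real.sqrt n * R ∧ x ⟨0, by omega⟩ = z} =
      ENNReal.ofReal (Real.sqrt (n * R ^ 2 - z ^ 2) ^ (n - 2)) *
        μH[(n : ℝ) - 2] (Metric.sphere (0 : EuclideanSpace ℝ (Fin (n - 1))) 1) := by
  obtain ⟨m, rfl⟩ : ∃ m, n = m + 1 := ⟨n - 1, by omega⟩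
  have hm : 2 ≤ m := by omega
  set r : ℝ := Real.sqrt ((m + 1 : ℕ) * R ^ 2 - z ^ 2) with hr_def
  have hr0 : 0 ≤ r := Real.sqrt_nonneg _
  have hrsq : r ^ 2 = (m + 1 : ℕ) * R ^ 2 - z ^ 2 :=
    Real.sq_sqrt (by linarith)
  have hd0 : (0 : ℝ) ≤ ((m + 1 : ℕ) : ℝ) - 2 := by
    push_cast; have : (2 : ℝ) ≤ m := by exact_mod_cast hm
    linarith
  -- the embedding of ℝ^m as the hyperplane x₀ = z in ℝ^(m+1)
  set f : EuclideanSpace ℝ (Fin m) → EuclideanSpace ℝ (Fin (m + 1)) :=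
    fun y => WithLp.toLp 2 (Fin.cons z (fun i => y i)) with hf_def
  have hf : Isometry f := by
    apply Isometry.of_dist_eq
    intro y y'
    rw [EuclideanSpace.dist_eq, EuclideanSpace.dist_eq]
    congr 1
    rw [Fin.sum_univ_succ]
    simp [hf_def]
  have hset : {x : EuclideanSpace ℝ (Fin (m + 1)) |
      ‖x‖ = Real.sqrt (m + 1 : ℕ) * R ∧ x ⟨0, by omega⟩ = z}
      = f '' Metric.sphere 0 r := by
    ext x
    simp only [Set.mem_setOf_eq, Set.mem_image, Metric.mem_sphere, dist_zero_right]
    constructor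
    · rintro ⟨hnorm, hx0⟩
      set y : EuclideanSpace ℝ (Fin m) := WithLp.toLp 2 (fun i => x i.succ) with hy_def
      refine ⟨y, ?_, ?_⟩
      · have h1 : ‖x‖ ^ 2 = (m + 1 : ℕ) * R ^ 2 := by
          rw [hnorm, mul_pow, Real.sq_sqrt (by positivity)]
        have h2 : ‖y‖ ^ 2 = r ^ 2 := by
          rw [normsq_eq y, hrsq, ← h1, normsq_eq x, Fin.sum_univ_succ]
          have : x (0 : Fin (m + 1)) = z := hx0
          rw [this, hy_def]; ring
        calc ‖y‖ = Real.sqrt (‖y‖ ^ 2) := (Real.sqrt_sq (norm_nonneg _)).symm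
          _ = Real.sqrt (r ^ 2) := by rw [h2]
          _ = r := Real.sqrt_sq hr0
      · ext i
        refine Fin.cases ?_ ?_ i
        · exact hx0.symm
        · intro j; simp [hf_def, hy_def]
    · rintro ⟨y, hy, rfl⟩
      constructor
      · have h1 : ‖f y‖ ^ 2 = (m + 1 : ℕ) * R ^ 2 := by
          rw [normsq_eq, Fin.sum_univ_succ]
          simp only [hf_def, Fin.cons_zero, Fin.cons_succ]
          have : ∑ i, y i ^ 2 = r ^ 2 := by rw [← normsq_eq, hy]
          rw [this, hrsq]; ring
        calc ‖f y‖ = Real.sqrt (‖f y‖ ^ 2) := (Real.sqrt_sq (norm_nonneg _)).symm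
          _ = Real.sqrt ((m + 1 : ℕ) * R ^ 2) := by rw [h1]
          _ = Real.sqrt (m + 1 : ℕ) * R := by
              rw [Real.sqrt_mul (by positivity), Real.sqrt_sq hR.le]
      · simp [hf_def]
  rw [hset, hf.hausdorffMeasure_image (Or.inl hd0)]
  rcases eq_or_lt_of_le hr0 with hr | hr
  · -- degenerate case r = 0
    rw [← hr, Metric.sphere_zero]
    have hdpos : (0 : ℝ) < ((m + 1 : ℕ) : ℝ) - 2 := by
      push_cast
      have : (2 : ℝ) ≤ m := by exact_mod_cast hm
      linarith
    haveI := Measure.noAtoms_hausdorff (EuclideanSpace ℝ (Fin m)) hdpos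
    rw [measure_singleton, zero_pow (by omega : m + 1 - 2 ≠ 0)]
    simp
  · have hrne : r ≠ 0 := ne_of_gt hr
    haveI : Nonempty (Fin m) := ⟨⟨0, by omega⟩⟩
    have hsphere : Metric.sphere (0 : EuclideanSpace ℝ (Fin m)) r
        = r • Metric.sphere (0 : EuclideanSpace ℝ (Fin m)) 1 := by
      rw [smul_sphere r (0 : EuclideanSpace ℝ (Fin m)) zero_le_one, smul_zero,
        Real.norm_of_nonneg hr0, mul_one]
    rw [hsphere, Measure.hausdorffMeasure_smul₀ hd0 hrne]
    simp only [Measure.smul_apply, ENNReal.smul_def]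
    congr 1
    have hcast : ((m + 1 : ℕ) : ℝ) - 2 = ((m + 1 - 2 : ℕ) : ℝ) := by
      rw [Nat.cast_sub (by omega : 2 ≤ m + 1)]
      push_cast
      ring
    rw [hcast, ENNReal.coe_rpow_of_nonneg _ (Nat.cast_nonneg _),
      ← enorm_eq_nnnorm, Real.enorm_eq_ofReal hr0, ENNReal.rpow_natCast, ENNReal.ofReal_pow hr0]
end
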